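/- arXiv:2311.09446 — 4 statements merged into one kernel-verified Lean document; each statement's English description precedes it below -/
import Mathlib

section
/- Coefficient relations implied by local asymptotic normality (marginal metamodel relations). Fix θ* ∈ ℝ^d, a positive definite d×d matrix K₂, and a bounded sequence (in probability) of random vectors S_n in ℝ^d. Suppose that for each n there are random coefficients a_n ∈ ℝ, b_n ∈ ℝ^d and random symmetric d×d matrices c_n such that μ(θ; Y_{1:n}) = a_n + b_nᵀθ + θᵀ c_n θ for all θ in a fixed open neighborhood of θ*, and suppose that for every bounded set B ⊆ ℝ^d containing 0, sup_{t∈B} | μ(θ* + t/√n; Y_{1:n}) − μ(θ*; Y_{1:n}) − S_nᵀ t + ½ tᵀ K₂ t | → 0 in probability as n → ∞. Then (1/n) c_n converges in probability to −½ K₂, and (1/√n)(b_n + 2 c_n θ*) − S_n converges in probability to 0. -/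
/-!
For `n` large, `θ* + t/√n` lies in `U` for every `t` in the finite cube `{-1, 0, 1}^d`, and
there the LAN remainder is exactly the quadratic polynomial `t ↦ vₙ ⬝ t + tᵀ Mₙ t` with
`vₙ = n^{-1/2} (bₙ + 2 cₙ θ*) - Sₙ` and `Mₙ = cₙ / n + K₂ / 2`. The values of a quadratic
polynomial with symmetric matrix at `±eₖ` and `±(eₖ + eₗ)` determine its coefficients, so each
coefficient of `vₙ` and `Mₙ` is at most twice the supremum of the remainder over the cube, which
tends to `0` in probability.
-/

open MeasureTheory Filter Matrix Real Topology

theorem Set.Finite.le_ciSup₂ {α β : Type*} [ConditionallyCompleteLattice β] {B : Set α}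
    (hB : B.Finite) (f : α → β) {t : α} (ht : t ∈ B) : f t ≤ ⨆ s ∈ B, f s :=
  _root_.le_ciSup₂ (f := fun s (_ : s ∈ B) => f s) ((hB.image f).bddAbove.mono <| by
    simp only [Set.iUnion_subset_iff, Set.range_subset_iff]
    exact fun s hs => ⟨s, hs, rfl⟩) t ht

theorem MeasureTheory.TendstoInMeasure.of_eventually_norm_sub_le {α ι E : Type*}
    [MeasurableSpace α] {μ : Measure α} [SeminormedAddCommGroup E] {l : Filter ι}
    {f : ι → α → E} {g : α → E} {F : ι → α → ℝ} {C : ℝ} (hC : 0 < C)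
    (hF : TendstoInMeasure μ F l 0) (h : ∀ᶠ i in l, ∀ x, ‖f i x - g x‖ ≤ C * F i x) :
    TendstoInMeasure μ f l g := by
  rw [tendstoInMeasure_iff_norm] at hF ⊢
  intro ε hε
  refine tendsto_of_tendsto_of_tendsto_of_le_of_le' tendsto_const_nhds (hF (ε / C) (by positivity))
    (.of_forall fun _ => zero_le) ?_
  filter_upwards [h] with i hi
  refine measure_mono fun x (hx : ε ≤ _) => ?_
  change ε / C ≤ ‖F i x - 0‖
  rw [div_le_iff₀' hC, sub_zero]
  exact (hx.trans (hi x)).trans (mul_le_mul_of_nonneg_left (le_norm_self _) hC.le)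

theorem eventually_forall_add_smul_mem {ι E : Type*} [SeminormedAddCommGroup E]
    [NormedSpace ℝ E] {θ : E} {U : Set E} (hU : U ∈ 𝓝 θ) {B : Set E}
    (hB : Bornology.IsBounded B) {l : Filter ι} {α : ι → ℝ} (hα : Tendsto α l (𝓝 0)) :
    ∀ᶠ i in l, ∀ t ∈ B, θ + α i • t ∈ U := by
  obtain ⟨R, hR, hBR⟩ := hB.exists_pos_norm_le
  obtain ⟨δ, hδ, hball⟩ := Metric.mem_nhds_iff.mp hU
  filter_upwards [(Metric.tendsto_nhds.mp hα) (δ / R) (by positivity)] with i hi t ht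
  refine hball ?_
  rw [Metric.mem_ball, dist_self_add_left, norm_smul]
  rw [Real.dist_0_eq_abs, lt_div_iff₀ hR] at hi
  exact (mul_le_mul_of_nonneg_left (hBR t ht) (norm_nonneg _)).trans_lt hi

theorem tendsto_inv_sqrt_natCast_atTop_zero : Tendsto (fun n : ℕ => (√n)⁻¹) atTop (𝓝 0) :=
  tendsto_inv_atTop_zero.comp (tendsto_sqrt_atTop.comp tendsto_natCast_atTop_atTop)

namespace Metamodel

variable {ι : Type*}

def cube (ι : Type*) : Set (ι → ℝ) := Set.univ.pi fun _ => {-1, 0, 1}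

theorem cube_finite [Finite ι] : (cube ι).Finite :=
  Set.Finite.pi fun _ => Set.toFinite _

theorem zero_mem_cube : (0 : ι → ℝ) ∈ cube ι :=
  Set.mem_univ_pi.mpr fun _ => by simp

section Fintype

variable [Fintype ι]

def quadPoly (v : ι → ℝ) (M : Matrix ι ι ℝ) (t : ι → ℝ) : ℝ := v ⬝ᵥ t + t ⬝ᵥ M *ᵥ t

theorem quadratic_remainder_eq_quadPoly (a : ℝ) (b θ S t : ι → ℝ) {c : Matrix ι ι ℝ}
    (hc : c.IsSymm) (K : Matrix ι ι ℝ) (α : ℝ) :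
    (a + b ⬝ᵥ (θ + α • t) + (θ + α • t) ⬝ᵥ c *ᵥ (θ + α • t)) - (a + b ⬝ᵥ θ + θ ⬝ᵥ c *ᵥ θ)
        - S ⬝ᵥ t + 1 / 2 * (t ⬝ᵥ K *ᵥ t)
      = quadPoly (fun k => α * (b k + 2 * (c *ᵥ θ) k) - S k) (α ^ 2 • c + (1 / 2 : ℝ) • K) t := by
  have hcross : θ ⬝ᵥ c *ᵥ t = t ⬝ᵥ c *ᵥ θ := by
    rw [dotProduct_mulVec, ← mulVec_transpose, hc.eq, dotProduct_comm]
  have hv : (fun k => α * (b k + 2 * (c *ᵥ θ) k) - S k) = α • b + (2 * α) • c *ᵥ θ - S := by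
    ext k
    simp only [Pi.sub_apply, Pi.add_apply, Pi.smul_apply, smul_eq_mul]
    ring
  rw [hv]
  simp only [quadPoly, dotProduct_add, add_dotProduct, sub_dotProduct, smul_dotProduct,
    mulVec_add, mulVec_smul, add_mulVec, smul_mulVec, dotProduct_smul, smul_eq_mul, hcross,
    dotProduct_comm (c *ᵥ θ) t]
  ring

end Fintype

variable [DecidableEq ι]

theorem single_mem_cube {s : ℝ} (hs : s = -1 ∨ s = 1) (k : ι) : Pi.single k s ∈ cube ι := by
  refine Set.mem_univ_pi.mpr fun i => ?_
  rcases eq_or_ne i k with rfl | hik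
  · rcases hs with rfl | rfl <;> simp
  · simp [hik]

theorem single_add_single_mem_cube {s : ℝ} (hs : s = -1 ∨ s = 1) {k l : ι} (hkl : k ≠ l) :
    Pi.single k s + Pi.single l s ∈ cube ι := by
  refine Set.mem_univ_pi.mpr fun i => ?_
  rcases eq_or_ne i k with rfl | hik
  · rcases hs with rfl | rfl <;> simp [hkl]
  · rcases eq_or_ne i l with rfl | hil
    · rcases hs with rfl | rfl <;> simp [hik]
    · simp [hik, hil]

variable [Fintype ι]

theorem quadPoly_single (v : ι → ℝ) (M : Matrix ι ι ℝ) (k : ι) (s : ℝ) :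
    quadPoly v M (Pi.single k s) = s * v k + s ^ 2 * M k k := by
  simp only [quadPoly, dotProduct_single, mulVec_single, op_smul_eq_smul, dotProduct_smul,
    single_dotProduct, col_apply, smul_eq_mul]
  ring

theorem quadPoly_single_add_single (v : ι → ℝ) {M : Matrix ι ι ℝ} (hM : M.IsSymm) (k l : ι)
    (s : ℝ) :
    quadPoly v M (Pi.single k s + Pi.single l s)
      = s * (v k + v l) + s ^ 2 * (M k k + M l l + 2 * M k l) := by
  simp only [quadPoly, dotProduct_add, dotProduct_single, mulVec_add, mulVec_single,
    op_smul_eq_smul, dotProduct_smul, add_dotProduct, single_dotProduct, col_apply, smul_eq_mul,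
    hM.apply l k]
  ring

theorem abs_apply_le_of_abs_quadPoly_le {v : ι → ℝ} {M : Matrix ι ι ℝ} {E : ℝ}
    (h : ∀ t ∈ cube ι, |quadPoly v M t| ≤ E) (k : ι) : |v k| ≤ E ∧ |M k k| ≤ E := by
  have hpos := h _ (single_mem_cube (Or.inr rfl) k)
  have hneg := h _ (single_mem_cube (Or.inl rfl) k)
  rw [quadPoly_single, abs_le] at hpos hneg
  constructor <;> rw [abs_le] <;> constructor <;> nlinarith

theorem abs_matrix_apply_le_of_abs_quadPoly_le {v : ι → ℝ} {M : Matrix ι ι ℝ} (hM : M.IsSymm)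
    {E : ℝ} (h : ∀ t ∈ cube ι, |quadPoly v M t| ≤ E) (k l : ι) : |M k l| ≤ 2 * E := by
  have hE : 0 ≤ E := (abs_nonneg _).trans (h 0 zero_mem_cube)
  have hkk := (abs_apply_le_of_abs_quadPoly_le h k).2
  rcases eq_or_ne k l with rfl | hkl
  · linarith
  have hll := (abs_apply_le_of_abs_quadPoly_le h l).2
  have hpos := h _ (single_add_single_mem_cube (Or.inr rfl) hkl)
  have hneg := h _ (single_add_single_mem_cube (Or.inl rfl) hkl)
  rw [quadPoly_single_add_single v hM, abs_le] at hpos hneg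
  rw [abs_le] at hkk hll ⊢
  constructor <;> nlinarith

end Metamodel

open Metamodel

theorem marginal_metamodel_coefficients_general {Ω : Type*} [MeasurableSpace Ω]
    (P : Measure Ω) {d : ℕ}
    (μ : ℕ → (Fin d → ℝ) → Ω → ℝ)   -- μ n θ ω = μ(θ; Y_{1:n}(ω))
    (θstar : Fin d → ℝ)
    (K₂ : Matrix (Fin d) (Fin d) ℝ) (hK₂ : K₂.PosDef)
    (S : ℕ → Ω → Fin d → ℝ)
    (a : ℕ → Ω → ℝ) (b : ℕ → Ω → Fin d → ℝ)
    (c : ℕ → Ω → Matrix (Fin d) (Fin d) ℝ)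
    (hsymm : ∀ n ω, (c n ω).IsSymm)
    -- quadratic form of μ on a fixed open neighborhood of θ*
    (U : Set (Fin d → ℝ)) (hU : IsOpen U) (hθU : θstar ∈ U)
    (hquad : ∀ n ω, ∀ θ ∈ U,
      μ n θ ω = a n ω + dotProduct (b n ω) θ + dotProduct θ ((c n ω).mulVec θ))
    -- the LAN expansion
    (hlan : ∀ B : Set (Fin d → ℝ), Bornology.IsBounded B → (0 : Fin d → ℝ) ∈ B →
      TendstoInMeasure P
        (fun (n : ℕ) ω => ⨆ t ∈ B,
          |μ n (θstar + (Real.sqrt n)⁻¹ • t) ω - μ n θstar ω -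
            dotProduct (S n ω) t + (1 / 2) * dotProduct t (K₂.mulVec t)|)
        atTop (fun _ => 0)) :
    (∀ k l, TendstoInMeasure P (fun (n : ℕ) ω => (n : ℝ)⁻¹ * c n ω k l)
        atTop (fun _ => -(1 / 2) * K₂ k l)) ∧
      (∀ k, TendstoInMeasure P
        (fun (n : ℕ) ω =>
          (Real.sqrt n)⁻¹ * (b n ω k + 2 * (c n ω).mulVec θstar k) - S n ω k)
        atTop (fun _ => 0)) := by
  have hK : K₂.IsSymm := by
    rw [IsSymm, ← conjTranspose_eq_transpose_of_trivial]
    exact hK₂.1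
  set F : ℕ → Ω → ℝ := fun n ω => ⨆ t ∈ cube (Fin d),
    |μ n (θstar + (√n)⁻¹ • t) ω - μ n θstar ω - S n ω ⬝ᵥ t + 1 / 2 * (t ⬝ᵥ K₂ *ᵥ t)|
  have hF : TendstoInMeasure P F atTop 0 := hlan _ cube_finite.isBounded zero_mem_cube
  set v : ℕ → Ω → Fin d → ℝ := fun n ω k =>
    (√n)⁻¹ * (b n ω k + 2 * (c n ω *ᵥ θstar) k) - S n ω k
  set M : ℕ → Ω → Matrix (Fin d) (Fin d) ℝ := fun n ω =>
    (√n)⁻¹ ^ 2 • c n ω + (1 / 2 : ℝ) • K₂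
  have hM : ∀ n ω, (M n ω).IsSymm := fun n ω => ((hsymm n ω).smul _).add (hK.smul _)
  have hbound : ∀ᶠ n : ℕ in atTop, ∀ ω, ∀ t ∈ cube (Fin d),
      |quadPoly (v n ω) (M n ω) t| ≤ F n ω := by
    filter_upwards [eventually_forall_add_smul_mem (hU.mem_nhds hθU) cube_finite.isBounded
      tendsto_inv_sqrt_natCast_atTop_zero] with n hn ω t ht
    refine Eq.trans_le ?_ (cube_finite.le_ciSup₂ _ ht)
    rw [hquad n ω _ (hn t ht), hquad n ω _ hθU,
      quadratic_remainder_eq_quadPoly _ _ _ _ _ (hsymm n ω)]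
  refine ⟨fun k l => hF.of_eventually_norm_sub_le two_pos ?_,
    fun k => hF.of_eventually_norm_sub_le one_pos ?_⟩
  · filter_upwards [hbound] with n hn ω
    have := abs_matrix_apply_le_of_abs_quadPoly_le (hM n ω) (hn ω) k l
    rw [Real.norm_eq_abs]
    convert this using 2
    simp [M, inv_pow, Real.sq_sqrt (Nat.cast_nonneg _)]
  · filter_upwards [hbound] with n hn ω
    simpa [v] using (abs_apply_le_of_abs_quadPoly_le (hn ω) k).1

/-- **Coefficient relations implied by local asymptotic normality (marginal metamodel
relations).**  If `μ(θ; Y_{1:n}) = a_n + b_nᵀθ + θᵀc_nθ` on a fixed open neighborhood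
of `θ*` for random coefficients `(a_n, b_n, c_n)` with `c_n` symmetric, `S_n` is
bounded in probability, and the LAN expansion
`sup_{t∈B} |μ(θ* + t/√n; Y) − μ(θ*; Y) − S_nᵀt + ½tᵀK₂t| → 0` in probability holds for
every bounded `B ∋ 0`, then `n⁻¹ c_n → −½K₂` and `n^{−1/2}(b_n + 2c_nθ*) − S_n → 0`
in probability. -/
theorem marginal_metamodel_coefficients {Ω : Type*} [MeasurableSpace Ω]
    (P : Measure Ω) [IsProbabilityMeasure P] {d : ℕ}
    (μ : ℕ → (Fin d → ℝ) → Ω → ℝ)   -- μ n θ ω = μ(θ; Y_{1:n}(ω))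
    (θstar : Fin d → ℝ)
    (K₂ : Matrix (Fin d) (Fin d) ℝ) (hK₂ : K₂.PosDef)
    (S : ℕ → Ω → Fin d → ℝ)
    (a : ℕ → Ω → ℝ) (b : ℕ → Ω → Fin d → ℝ)
    (c : ℕ → Ω → Matrix (Fin d) (Fin d) ℝ)
    (hsymm : ∀ n ω, (c n ω).IsSymm)
    -- quadratic form of μ on a fixed open neighborhood of θ*
    (U : Set (Fin d → ℝ)) (hU : IsOpen U) (hθU : θstar ∈ U)
    (hquad : ∀ n ω, ∀ θ ∈ U,
      μ n θ ω = a n ω + dotProduct (b n ω) θ + dotProduct θ ((c n ω).mulVec θ))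
    -- S_n is bounded in probability
    (htight : ∀ ε : ℝ, 0 < ε → ∃ R : ℝ, ∀ n : ℕ,
      P {ω | R < ‖S n ω‖} < ENNReal.ofReal ε)
    -- the LAN expansion
    (hlan : ∀ B : Set (Fin d → ℝ), Bornology.IsBounded B → (0 : Fin d → ℝ) ∈ B →
      TendstoInMeasure P
        (fun (n : ℕ) ω => ⨆ t ∈ B,
          |μ n (θstar + (Real.sqrt n)⁻¹ • t) ω - μ n θstar ω -
            dotProduct (S n ω) t + (1 / 2) * dotProduct t (K₂.mulVec t)|)
        atTop (fun _ => 0)) :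
    (∀ k l, TendstoInMeasure P (fun (n : ℕ) ω => (n : ℝ)⁻¹ * c n ω k l)
        atTop (fun _ => -(1 / 2) * K₂ k l)) ∧
      (∀ k, TendstoInMeasure P
        (fun (n : ℕ) ω =>
          (Real.sqrt n)⁻¹ * (b n ω k + 2 * (c n ω).mulVec θstar k) - S n ω k)
        atTop (fun _ => 0)) :=
  marginal_metamodel_coefficients_general P μ θstar K₂ hK₂ S a b c hsymm U hU hθU hquad hlan
end

section
/- Quadratic characterization of the confidence interval for the simulation-based proxy in one dimension (Corollary 4.2). Let d = 1, M ≥ 4, and let Q ∈ ℝ^{M×M} be a positive semidefinite matrix, Θ₂ ∈ ℝ^{M×2} a matrix with rows (θ_m, θ_m²), and ℓ ∈ ℝ^M. Write Θ₂ᵀ Q Θ₂ = [[ρ₁₁, ρ₁₂], [ρ₁₂, ρ₂₂]] and (ζ₁, ζ₂)ᵀ = Θ₂ᵀ Q ℓ. Fix s > 0 (playing the role of (M−1)σ̂²_2nd (F/(M−3) + 1)) and set ζ₀ := ℓᵀQℓ − s. For θ ∈ ℝ define T(θ) := Θ₂ (θ, −½)ᵀ ∈ ℝ^M and assume T(θ)ᵀ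 Q T(θ) = θ²ρ₁₁ − θρ₁₂ + ρ₂₂/4 > 0, and let P(θ) := T(θ) (T(θ)ᵀQT(θ))⁻¹ T(θ)ᵀ. Then ‖ (I_M − P(θ)Q) ℓ ‖²_Q < s if and only if (ζ₀ ρ₁₁ − ζ₁²) θ² + (ζ₁ ζ₂ − ζ₀ ρ₁₂) θ + ¼ (ρ₂₂ ζ₀ − ζ₂²) < 0. -/
open Matrix Real

/-- The `M × 2` matrix `Θ₂` with rows `(θ_m, θ_m²)` (case `d = 1`). -/
def theta12Mat {M : ℕ} (θs : Fin M → ℝ) : Matrix (Fin M) (Fin 2) ℝ :=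
  fun m => ![θs m, θs m ^ 2]

/-- `T(θ) = Θ₂ (θ, −½)ᵀ ∈ ℝ^M`. -/
noncomputable def tVec {M : ℕ} (θs : Fin M → ℝ) (θ : ℝ) : Fin M → ℝ :=
  (theta12Mat θs).mulVec ![θ, -(1 / 2)]

/-- `P(θ) = T(θ) (T(θ)ᵀ Q T(θ))⁻¹ T(θ)ᵀ`. -/
noncomputable def projP {M : ℕ} (Q : Matrix (Fin M) (Fin M) ℝ) (θs : Fin M → ℝ)
    (θ : ℝ) : Matrix (Fin M) (Fin M) ℝ :=
  (dotProduct (tVec θs θ) (Q.mulVec (tVec θs θ)))⁻¹ •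
    Matrix.vecMulVec (tVec θs θ) (tVec θs θ)

section aux
variable {M : ℕ}

lemma vecMulVec_mulVec' (T y : Fin M → ℝ) :
    (Matrix.vecMulVec T T).mulVec y = (dotProduct T y) • T := by
  ext i
  simp [Matrix.mulVec, Matrix.vecMulVec_apply, dotProduct, Finset.mul_sum, mul_comm,
    mul_left_comm]

lemma sym_swap (Q : Matrix (Fin M) (Fin M) ℝ) (hQ : Q.PosSemidef) (x y : Fin M → ℝ) :
    dotProduct x (Q.mulVec y) = dotProduct y (Q.mulVec x) := by
  have hsym : Qᵀ = Q := by
    have := hQ.1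
    rwa [Matrix.IsHermitian, conjTranspose_eq_transpose_of_trivial] at this
  have h1 : x ᵥ* Q = Q *ᵥ x := by
    conv_lhs => rw [← hsym]
    rw [Matrix.vecMul_transpose]
  rw [Matrix.dotProduct_mulVec, h1, dotProduct_comm]

lemma tVec_dot (θs : Fin M → ℝ) (θ : ℝ) (y : Fin M → ℝ) :
    dotProduct (tVec θs θ) y =
      θ * (((theta12Mat θs)ᵀ).mulVec y 0) - (((theta12Mat θs)ᵀ).mulVec y 1) / 2 := by
  simp only [tVec, theta12Mat, Matrix.mulVec, dotProduct, Matrix.transpose_apply,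
    Fin.sum_univ_two, Matrix.cons_val_zero, Matrix.cons_val_one, Matrix.head_cons]
  rw [Finset.mul_sum, Finset.sum_div, ← Finset.sum_sub_distrib]
  apply Finset.sum_congr rfl
  intro m _
  ring
end aux

/-- **Quadratic characterization of the confidence interval for the simulation-based
proxy in one dimension** (Corollary 4.2).  With `Q` positive semidefinite,
`Θ₂ᵀQΘ₂ = [[ρ₁₁, ρ₁₂],[ρ₁₂, ρ₂₂]]`, `(ζ₁, ζ₂)ᵀ = Θ₂ᵀQℓ`, `ζ₀ = ℓᵀQℓ − s` for a fixed
`s > 0`, and `T(θ)ᵀQT(θ) = θ²ρ₁₁ − θρ₁₂ + ρ₂₂/4 > 0`, one has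
`‖(I_M − P(θ)Q)ℓ‖²_Q < s` iff
`(ζ₀ρ₁₁ − ζ₁²)θ² + (ζ₁ζ₂ − ζ₀ρ₁₂)θ + ¼(ρ₂₂ζ₀ − ζ₂²) < 0`. -/
theorem ci_proxy_quadratic {M : ℕ} (hM : 4 ≤ M)
    (Q : Matrix (Fin M) (Fin M) ℝ) (hQ : Q.PosSemidef)
    (θs : Fin M → ℝ) (ℓ : Fin M → ℝ) (s : ℝ) (hs : 0 < s) (θ : ℝ)
    (hTQT : dotProduct (tVec θs θ) (Q.mulVec (tVec θs θ)) =
        θ ^ 2 * ((theta12Mat θs)ᵀ * Q * theta12Mat θs) 0 0 -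
          θ * ((theta12Mat θs)ᵀ * Q * theta12Mat θs) 0 1 +
          ((theta12Mat θs)ᵀ * Q * theta12Mat θs) 1 1 / 4)
    (hTQTpos : 0 < dotProduct (tVec θs θ) (Q.mulVec (tVec θs θ))) :
    dotProduct (ℓ - (projP Q θs θ * Q).mulVec ℓ)
        (Q.mulVec (ℓ - (projP Q θs θ * Q).mulVec ℓ)) < s ↔
      ((dotProduct ℓ (Q.mulVec ℓ) - s) * ((theta12Mat θs)ᵀ * Q * theta12Mat θs) 0 0 -
            (((theta12Mat θs)ᵀ * Q).mulVec ℓ 0) ^ 2) * θ ^ 2 +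
          ((((theta12Mat θs)ᵀ * Q).mulVec ℓ 0) * (((theta12Mat θs)ᵀ * Q).mulVec ℓ 1) -
            (dotProduct ℓ (Q.mulVec ℓ) - s) *
              ((theta12Mat θs)ᵀ * Q * theta12Mat θs) 0 1) * θ +
          (1 / 4) * (((theta12Mat θs)ᵀ * Q * theta12Mat θs) 1 1 *
              (dotProduct ℓ (Q.mulVec ℓ) - s) -
            (((theta12Mat θs)ᵀ * Q).mulVec ℓ 1) ^ 2) < 0 := by
  classical
  set T := tVec θs θ with hT
  set c := dotProduct T (Q.mulVec T) with hc
  set w := dotProduct T (Q.mulVec ℓ) with hw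
  set L := dotProduct ℓ (Q.mulVec ℓ) with hL
  have hc0 : c ≠ 0 := ne_of_gt hTQTpos
  set ζ1 := ((theta12Mat θs)ᵀ * Q).mulVec ℓ 0 with hz1
  set ζ2 := ((theta12Mat θs)ᵀ * Q).mulVec ℓ 1 with hz2
  set ρ11 := ((theta12Mat θs)ᵀ * Q * theta12Mat θs) 0 0 with hr11
  set ρ12 := ((theta12Mat θs)ᵀ * Q * theta12Mat θs) 0 1 with hr12
  set ρ22 := ((theta12Mat θs)ᵀ * Q * theta12Mat θs) 1 1 with hr22
  have hwz : w = θ * ζ1 - ζ2 / 2 := by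
    have h1 : ((theta12Mat θs)ᵀ * Q).mulVec ℓ = ((theta12Mat θs)ᵀ).mulVec (Q.mulVec ℓ) := by
      rw [Matrix.mulVec_mulVec]
    rw [hw, hz1, hz2, h1, tVec_dot]
  have hPv : (projP Q θs θ * Q).mulVec ℓ = (c⁻¹ * w) • T := by
    rw [← Matrix.mulVec_mulVec, projP, Matrix.smul_mulVec, vecMulVec_mulVec']
    rw [smul_smul]
  have key : dotProduct (ℓ - (projP Q θs θ * Q).mulVec ℓ)
      (Q.mulVec (ℓ - (projP Q θs θ * Q).mulVec ℓ)) = L - w ^ 2 / c := by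
    rw [hPv]
    have hsw : dotProduct ℓ (Q.mulVec T) = w := (sym_swap Q hQ ℓ T).trans hw.symm
    rw [Matrix.mulVec_sub, Matrix.mulVec_smul]
    simp only [sub_dotProduct, dotProduct_sub, smul_dotProduct, dotProduct_smul, smul_eq_mul]
    rw [hsw, ← hw, ← hc, ← hL]
    field_simp
    ring
  rw [key]
  have hcc : c = θ ^ 2 * ρ11 - θ * ρ12 + ρ22 / 4 := hTQT
  have hq : ((L - s) * ρ11 - ζ1 ^ 2) * θ ^ 2 + (ζ1 * ζ2 - (L - s) * ρ12) * θ +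
      1 / 4 * (ρ22 * (L - s) - ζ2 ^ 2) = (L - s) * c - w ^ 2 := by
    rw [hcc, hwz]; ring
  rw [hq]
  rw [show (L - w ^ 2 / c < s) ↔ (L - s < w ^ 2 / c) from by constructor <;> intro <;> linarith,
    lt_div_iff₀ hTQTpos]
  constructor <;> intro <;> linarith
end

section
/- Sub-Gaussian tail bound on the Jensen bias. Let Z be an integrable real random variable with mean m = E[Z], and suppose there exist constants C > 0 and C′ > 0 such that P[Z − m ≥ t] ≤ (C′ / (√(2π) C)) · exp(−t²/(2C²)) for every t ≥ 0. Then E[exp(Z)] is finite and log E[exp(Z)] − m ≤ C²/2 + log(1 + C′). -/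
/-! Write `X = Z - E[Z]`. Since `exp X ≤ 1 + ∫₀^{max X 0} eᵗ dt`, the layer cake formula gives
`E[exp X] ≤ 1 + ∫₀^∞ eᵗ P[X ≥ t] dt`. The assumed tail is `C'` times the `N(0, C²)` density, so
this integral is at most `C'` times the Gaussian moment generating function at `1`, that is
`C' exp (C²/2)`. Hence `E[exp X] ≤ 1 + C' exp (C²/2) ≤ (1 + C') exp (C²/2)`, and
`log E[exp Z] - E[Z] = log E[exp X]`. -/

open MeasureTheory ProbabilityTheory Real Set
open scoped ENNReal NNReal

theorem lintegral_exp_le_measure_univ_add_lintegral_meas_le_mul_exp {α : Type*}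
    [MeasurableSpace α] (μ : Measure α) {X : α → ℝ} (hX : AEMeasurable X μ) :
    ∫⁻ ω, ENNReal.ofReal (exp (X ω)) ∂μ ≤
      μ univ + ∫⁻ t in Ioi 0, μ {ω | t ≤ X ω} * ENNReal.ofReal (exp t) := by
  have layer_cake := lintegral_comp_eq_lintegral_meas_le_mul μ
    (ae_of_all _ fun ω => le_max_right (X ω) 0) (hX.max aemeasurable_const)
    (fun t _ => intervalIntegral.intervalIntegrable_exp) (ae_of_all _ fun t => (exp_pos t).le)
  have pos_part_tail : ∀ t > (0 : ℝ), {ω | t ≤ max (X ω) 0} = {ω | t ≤ X ω} := fun t ht => by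
    ext ω; simp [ht.not_ge]
  have exp_le : ∀ ω, ENNReal.ofReal (exp (X ω)) ≤
      1 + ENNReal.ofReal (∫ t in (0 : ℝ)..max (X ω) 0, exp t) := fun ω => by
    rw [integral_exp, exp_zero, ← ENNReal.ofReal_one,
      ← ENNReal.ofReal_add zero_le_one (sub_nonneg.2 (one_le_exp (le_max_right _ _)))]
    exact ENNReal.ofReal_le_ofReal (by simp)
  calc ∫⁻ ω, ENNReal.ofReal (exp (X ω)) ∂μ
      ≤ ∫⁻ ω, (1 + ENNReal.ofReal (∫ t in (0 : ℝ)..max (X ω) 0, exp t)) ∂μ :=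
        lintegral_mono exp_le
    _ = μ univ + ∫⁻ t in Ioi 0, μ {ω | t ≤ max (X ω) 0} * ENNReal.ofReal (exp t) := by
        rw [lintegral_add_left' aemeasurable_const, lintegral_one, layer_cake]
    _ = μ univ + ∫⁻ t in Ioi 0, μ {ω | t ≤ X ω} * ENNReal.ofReal (exp t) := by
        congr 1
        exact setLIntegral_congr_fun measurableSet_Ioi fun t ht => by rw [pos_part_tail t ht]

theorem lintegral_gaussianPDF_mul_exp {v : ℝ≥0} (hv : v ≠ 0) :
    ∫⁻ t, gaussianPDF 0 v t * ENNReal.ofReal (exp t) = ENNReal.ofReal (exp (v / 2)) := by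
  have mgf_one : ∫ t, exp t ∂gaussianReal 0 v = exp (v / 2) := by
    simpa [mgf] using congrFun (mgf_id_gaussianReal (μ := 0) (v := v)) 1
  calc ∫⁻ t, gaussianPDF 0 v t * ENNReal.ofReal (exp t)
      = ∫⁻ t, ENNReal.ofReal (exp t) ∂gaussianReal 0 v := by
        rw [gaussianReal_of_var_ne_zero 0 hv,
          lintegral_withDensity_eq_lintegral_mul _ (measurable_gaussianPDF 0 v) (by fun_prop)]
        rfl
    _ = ENNReal.ofReal (∫ t, exp t ∂gaussianReal 0 v) :=
        (ofReal_integral_eq_lintegral_ofReal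
          (by simpa using integrable_exp_mul_gaussianReal (μ := 0) (v := v) 1)
          (ae_of_all _ fun t => (exp_pos t).le)).symm
    _ = ENNReal.ofReal (exp (v / 2)) := by rw [mgf_one]

theorem lintegral_exp_le_of_meas_le_mul_gaussianPDF {α : Type*} [MeasurableSpace α]
    (μ : Measure α) {X : α → ℝ} (hX : AEMeasurable X μ) {c : ℝ≥0∞} {v : ℝ≥0} (hv : v ≠ 0)
    (htail : ∀ t > 0, μ {ω | t ≤ X ω} ≤ c * gaussianPDF 0 v t) :
    ∫⁻ ω, ENNReal.ofReal (exp (X ω)) ∂μ ≤ μ univ + c * ENNReal.ofReal (exp (v / 2)) := by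
  calc ∫⁻ ω, ENNReal.ofReal (exp (X ω)) ∂μ
      ≤ μ univ + ∫⁻ t in Ioi 0, μ {ω | t ≤ X ω} * ENNReal.ofReal (exp t) :=
        lintegral_exp_le_measure_univ_add_lintegral_meas_le_mul_exp μ hX
    _ ≤ μ univ + ∫⁻ t, c * gaussianPDF 0 v t * ENNReal.ofReal (exp t) := by
        gcongr μ univ + ?_
        refine (setLIntegral_mono' measurableSet_Ioi fun t ht => ?_).trans
          (setLIntegral_le_lintegral (Ioi (0 : ℝ)) _)
        exact mul_le_mul_left (htail t ht) _
    _ = μ univ + c * ENNReal.ofReal (exp (v / 2)) := by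
        simp_rw [mul_assoc]
        rw [lintegral_const_mul _ (by fun_prop), lintegral_gaussianPDF_mul_exp hv]

theorem integrable_exp_and_integral_exp_le_of_lintegral_le {α : Type*} [MeasurableSpace α]
    {μ : Measure α} {X : α → ℝ} (hX : AEMeasurable X μ) {B : ℝ} (hB : 0 ≤ B)
    (h : ∫⁻ ω, ENNReal.ofReal (exp (X ω)) ∂μ ≤ ENNReal.ofReal B) :
    Integrable (fun ω => exp (X ω)) μ ∧ ∫ ω, exp (X ω) ∂μ ≤ B := by
  have hexp : AEMeasurable (fun ω => exp (X ω)) μ := measurable_exp.comp_aemeasurable hX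
  constructor
  · simpa [(exp_pos _).le] using integrable_toReal_of_lintegral_ne_top hexp.ennreal_ofReal
      (h.trans_lt ENNReal.ofReal_lt_top).ne
  · rw [integral_eq_lintegral_of_nonneg_ae (ae_of_all _ fun ω => (exp_pos _).le)
      hexp.aestronglyMeasurable]
    exact ENNReal.toReal_le_of_le_ofReal hB h

theorem gaussianPDFReal_zero_sq {σ : ℝ} (hσ : 0 ≤ σ) (x : ℝ) :
    gaussianPDFReal 0 (σ ^ 2).toNNReal x = (√(2 * π) * σ)⁻¹ * exp (-x ^ 2 / (2 * σ ^ 2)) := by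
  rw [gaussianPDFReal, Real.coe_toNNReal _ (sq_nonneg σ), sqrt_mul' _ (sq_nonneg σ), sqrt_sq hσ,
    sub_zero]

theorem log_integral_exp_sub_const {α : Type*} [MeasurableSpace α] {μ : Measure α} [NeZero μ]
    {X : α → ℝ} (m : ℝ) (hX : Integrable (fun ω => exp (X ω - m)) μ) :
    log (∫ ω, exp (X ω) ∂μ) - m = log (∫ ω, exp (X ω - m) ∂μ) := by
  have exp_split : ∫ ω, exp (X ω) ∂μ = exp m * ∫ ω, exp (X ω - m) ∂μ := by
    rw [← integral_const_mul]
    simp_rw [← exp_add, add_sub_cancel]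
  rw [exp_split, log_mul (exp_ne_zero m) (integral_exp_pos hX).ne', log_exp, add_sub_cancel_left]

/-- **Sub-Gaussian tail bound on the Jensen bias.**  If `Z` is integrable with mean
`m = E[Z]` and `P[Z − m ≥ t] ≤ (C'/(√(2π) C)) exp(−t²/(2C²))` for all `t ≥ 0`, then
`E[exp Z]` is finite and `log E[exp Z] − m ≤ C²/2 + log(1 + C')`. -/
theorem jensen_bias_subgaussian {Ω : Type*} [MeasurableSpace Ω]
    (P : Measure Ω) [IsProbabilityMeasure P]
    (Z : Ω → ℝ) (hZ : Integrable Z P)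
    (C C' : ℝ) (hC : 0 < C) (hC' : 0 < C')
    (htail : ∀ t : ℝ, 0 ≤ t →
      P {ω | t ≤ Z ω - ∫ x, Z x ∂P} ≤
        ENNReal.ofReal (C' / (Real.sqrt (2 * π) * C) * Real.exp (-t ^ 2 / (2 * C ^ 2)))) :
    Integrable (fun ω => Real.exp (Z ω)) P ∧
      Real.log (∫ ω, Real.exp (Z ω) ∂P) - ∫ x, Z x ∂P ≤ C ^ 2 / 2 + Real.log (1 + C') := by
  set m := ∫ x, Z x ∂P
  set v : ℝ≥0 := (C ^ 2).toNNReal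
  have hv : v ≠ 0 := by simpa [v] using hC.ne'
  have hX : AEMeasurable (fun ω => Z ω - m) P := hZ.aemeasurable.sub_const m
  have gaussian_tail : ∀ t > 0, P {ω | t ≤ Z ω - m} ≤ ENNReal.ofReal C' * gaussianPDF 0 v t := by
    intro t ht
    rw [gaussianPDF, ← ENNReal.ofReal_mul hC'.le, gaussianPDFReal_zero_sq hC.le, ← mul_assoc,
      ← div_eq_mul_inv]
    exact htail t ht.le
  have mgf_bound : ∫⁻ ω, ENNReal.ofReal (exp (Z ω - m)) ∂P ≤
      ENNReal.ofReal (1 + C' * exp (C ^ 2 / 2)) := by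
    rw [ENNReal.ofReal_add zero_le_one (by positivity), ENNReal.ofReal_one,
      ENNReal.ofReal_mul hC'.le]
    simpa [v, sq_nonneg C] using
      lintegral_exp_le_of_meas_le_mul_gaussianPDF P hX hv gaussian_tail
  obtain ⟨hint, hle⟩ := integrable_exp_and_integral_exp_le_of_lintegral_le hX (by positivity)
    mgf_bound
  refine ⟨by simpa [exp_sub] using hint.mul_const (exp m), ?_⟩
  rw [log_integral_exp_sub_const m hint]
  calc log (∫ ω, exp (Z ω - m) ∂P)
      ≤ log ((1 + C') * exp (C ^ 2 / 2)) := by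
        refine log_le_log (integral_exp_pos hint) (hle.trans ?_)
        nlinarith [one_le_exp (by positivity : 0 ≤ C ^ 2 / 2)]
    _ = C ^ 2 / 2 + log (1 + C') := by
        rw [log_mul (by positivity) (exp_ne_zero _), log_exp, add_comm]
end

section
/- The simulation-based proxy equals the true parameter in the gamma–Poisson model. Fix γ > 0, λ₀ > 0, and n ≥ 1. Let Y be a random count with the marginal distribution of the gamma–Poisson model at (γ, λ₀), i.e., Y | X ∼ Poisson(X) with X ∼ Gamma(γ, λ₀), and for λ > 0 define the data-averaged expected simulated log-likelihood per observation u(λ₀, λ) := E_Y[ μ₁(λ; Y) ], where μ₁(λ; y) = E_{X ∼ Gamma(γ,λ)}[ log( e^{−X} X^{y} / y! ) ]. Then u(λ₀, λ) is finite for all λ > 0 and the function λ ↦ u(λ₀, λ) on (0, ∞) attains its unique global maximum at λ = λ₀. Consequently the simulation-based proxy satisfies R(λ₀) = λ₀, so the inference bias is zero. -/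
open MeasureTheory ProbabilityTheory Real

/-- The expected simulated log-likelihood of a single Poisson observation `y`
under simulation `X ∼ Gamma(γ, λ)`:  `μ₁(λ; y) = E[ log( e^{−X} X^y / y! ) ]`. -/
noncomputable def esllGammaPoisson (γ lam : ℝ) (y : ℕ) : ℝ :=
  ∫ x, Real.log (Real.exp (-x) * x ^ y / (Nat.factorial y : ℝ)) ∂(gammaMeasure γ lam)

/-- The marginal probability mass function of an observation in the gamma–Poisson
model at parameter `(γ, λ₀)`:  `P(Y = y) = E_{X ∼ Gamma(γ,λ₀)}[ e^{−X} X^y / y! ]`. -/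
noncomputable def margGammaPoisson (γ lam₀ : ℝ) (y : ℕ) : ℝ :=
  ∫ x, Real.exp (-x) * x ^ y / (Nat.factorial y : ℝ) ∂(gammaMeasure γ lam₀)

open Set
open scoped Nat

/-!
Given `X = x`, the Poisson log-likelihood of `y` is `-x + y log x - log y!`. Since
`λ X ∼ Gamma(γ, 1)` when `X ∼ Gamma(γ, λ)`, we get `E log X = c_γ - log λ`, so
`μ₁(λ; y) = -γ/λ + y (c_γ - log λ) - log y!`. Averaging over `Y`, whose mean is `γ/λ₀`, gives
`u(λ₀, λ) = -γ/λ - (γ/λ₀) log λ + C` with `C` free of `λ`, and `log t < t - 1` at `t = λ₀/λ ≠ 1`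
makes `λ₀` the strict maximiser. Every sum-integral exchange is justified by the Poisson factorial
moments `E[Y (Y - 1) ⋯ (Y - k + 1) | X = x] = x ^ k`, together with `log y! ≤ y (y - 1)`.
-/

namespace Real

theorem abs_log_le_self_add_rpow_neg_div {x s : ℝ} (hx : 0 < x) (hs : 0 < s) :
    |log x| ≤ x + x ^ (-s) / s := by
  have hxs : 0 ≤ x ^ (-s) / s := by positivity
  rcases le_or_gt 1 x with h1 | h1
  · rw [abs_of_nonneg (log_nonneg h1)]
    linarith [log_le_sub_one_of_pos hx]
  · rw [abs_of_nonpos (log_nonpos hx.le h1.le), ← log_inv, rpow_neg hx.le, ← inv_rpow hx.le]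
    linarith [log_le_rpow_div (inv_nonneg.mpr hx.le) hs]

theorem log_factorial_le_descFactorial_two (n : ℕ) : log (n ! : ℝ) ≤ n.descFactorial 2 := by
  rcases Nat.eq_zero_or_pos n with rfl | hn
  · simp
  have hn' : (0 : ℝ) < n := Nat.cast_pos.mpr hn
  calc log (n ! : ℝ) ≤ log ((n : ℝ) ^ n) :=
        log_le_log (by positivity) (by exact_mod_cast Nat.factorial_le_pow n)
    _ = n * log n := log_pow n n
    _ ≤ n * (n - 1) := mul_le_mul_of_nonneg_left (log_le_sub_one_of_pos hn') hn'.le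
    _ = n.descFactorial 2 := (Nat.cast_descFactorial_two ℝ n).symm

theorem neg_div_sub_div_mul_log_lt {γ lam₀ lam : ℝ} (hγ : 0 < γ) (hlam₀ : 0 < lam₀)
    (hlam : 0 < lam) (hne : lam ≠ lam₀) :
    -(γ / lam) - γ / lam₀ * log lam < -(γ / lam₀) - γ / lam₀ * log lam₀ := by
  have hlog : log (lam₀ / lam) < lam₀ / lam - 1 :=
    log_lt_sub_one_of_pos (div_pos hlam₀ hlam)
      (by rwa [ne_eq, div_eq_one_iff_eq hlam.ne', eq_comm])
  rw [log_div hlam₀.ne' hlam.ne'] at hlog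
  have h := mul_lt_mul_of_pos_left hlog (div_pos hγ hlam₀)
  have hid : γ / lam₀ * (lam₀ / lam - 1) = γ / lam - γ / lam₀ := by
    field_simp
  linarith

end Real

namespace MeasureTheory

theorem hasSum_integral_of_nonneg {α ι : Type*} [MeasurableSpace α] [Countable ι]
    {μ : Measure α} {F : ι → α → ℝ} {f : α → ℝ} (hF_meas : ∀ i, AEStronglyMeasurable (F i) μ)
    (hF_nonneg : ∀ i, 0 ≤ᵐ[μ] F i) (hf : Integrable f μ)
    (h_lim : ∀ᵐ a ∂μ, HasSum (fun i => F i a) (f a)) :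
    HasSum (fun i => ∫ a, F i a ∂μ) (∫ a, f a ∂μ) := by
  refine hasSum_integral_of_dominated_convergence F hF_meas
    (fun i => (hF_nonneg i).mono fun a ha => (norm_of_nonneg ha).le)
    (h_lim.mono fun a ha => ha.summable) (hf.congr ?_) h_lim
  filter_upwards [h_lim] with a ha using ha.tsum_eq.symm

end MeasureTheory

namespace ProbabilityTheory

section GammaMeasure

variable {a r : ℝ}

theorem measurable_gammaPDF (a r : ℝ) : Measurable (gammaPDF a r) :=
  (measurable_gammaPDFReal a r).ennreal_ofReal

theorem ae_pos_gammaMeasure (a r : ℝ) : ∀ᵐ x ∂gammaMeasure a r, 0 < x := by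
  rw [gammaMeasure, ae_withDensity_iff (measurable_gammaPDF a r)]
  filter_upwards [Measure.ae_ne volume 0] with x hx0 hpdf
  exact lt_of_le_of_ne (not_lt.mp fun hx => hpdf (gammaPDF_of_neg hx)) hx0.symm

theorem integral_gammaMeasure (ha : 0 < a) (hr : 0 < r) (g : ℝ → ℝ) :
    ∫ x, g x ∂gammaMeasure a r = ∫ x in Ioi 0, gammaPDFReal a r x * g x := by
  rw [← Measure.restrict_eq_self_of_ae_mem (s := Ioi 0) (ae_pos_gammaMeasure a r), gammaMeasure,
    setIntegral_withDensity_eq_setIntegral_toReal_smul (measurable_gammaPDF a r)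
      (ae_of_all _ fun _ => ENNReal.ofReal_lt_top) g measurableSet_Ioi]
  simp only [gammaPDF, ENNReal.toReal_ofReal (gammaPDFReal_nonneg ha hr _), smul_eq_mul]

theorem integrable_gammaMeasure_iff (ha : 0 < a) (hr : 0 < r) (g : ℝ → ℝ) :
    Integrable g (gammaMeasure a r) ↔
      IntegrableOn (fun x => gammaPDFReal a r x * g x) (Ioi 0) := by
  rw [← Measure.restrict_eq_self_of_ae_mem (s := Ioi 0) (ae_pos_gammaMeasure a r), gammaMeasure,
    restrict_withDensity measurableSet_Ioi, integrable_withDensity_iff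
      (measurable_gammaPDF a r) (ae_of_all _ fun _ => ENNReal.ofReal_lt_top)]
  simp only [gammaPDF, ENNReal.toReal_ofReal (gammaPDFReal_nonneg ha hr _), mul_comm (g _)]
  rfl

theorem gammaPDFReal_eq_mul_gammaPDFReal_one (hr : 0 < r) (x : ℝ) :
    gammaPDFReal a r x = r * gammaPDFReal a 1 (r * x) := by
  by_cases hx : 0 ≤ x
  · have hrx : 0 ≤ r * x := mul_nonneg hr.le hx
    simp only [gammaPDFReal, if_pos hx, if_pos hrx, one_rpow, one_mul,
      mul_rpow hr.le hx, rpow_sub_one hr.ne']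
    field_simp
  · have hrx : ¬ 0 ≤ r * x := fun h => hx (nonneg_of_mul_nonneg_right h hr)
    simp [gammaPDFReal, hx, hrx]

theorem integral_comp_mul_gammaMeasure (ha : 0 < a) (hr : 0 < r) (g : ℝ → ℝ) :
    ∫ x, g (r * x) ∂gammaMeasure a r = ∫ x, g x ∂gammaMeasure a 1 := by
  have h := integral_comp_mul_left_Ioi' (fun x => gammaPDFReal a 1 x * g x) 0 hr
  rw [mul_zero, smul_eq_mul, ← integral_const_mul] at h
  rw [integral_gammaMeasure ha hr, integral_gammaMeasure ha one_pos, ← h]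
  simp only [gammaPDFReal_eq_mul_gammaPDFReal_one hr, mul_assoc]

theorem integrable_comp_mul_gammaMeasure_iff (ha : 0 < a) (hr : 0 < r) (g : ℝ → ℝ) :
    Integrable (fun x => g (r * x)) (gammaMeasure a r) ↔ Integrable g (gammaMeasure a 1) := by
  have h := integrableOn_Ioi_comp_mul_left_iff (fun x => gammaPDFReal a 1 x * g x) 0 hr
  rw [mul_zero] at h
  rw [integrable_gammaMeasure_iff ha hr, integrable_gammaMeasure_iff ha one_pos, ← h]
  simp only [gammaPDFReal_eq_mul_gammaPDFReal_one hr, mul_assoc]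
  exact integrable_const_mul_iff hr.ne'.isUnit _

theorem gammaPDFReal_one_mul_rpow {x : ℝ} (hx : 0 < x) (p : ℝ) :
    gammaPDFReal a 1 x * x ^ p = (Gamma a)⁻¹ * (exp (-x) * x ^ (a + p - 1)) := by
  rw [gammaPDFReal, if_pos hx.le, one_rpow, one_mul, show a + p - 1 = a - 1 + p by ring,
    rpow_add hx]
  ring

theorem integrable_rpow_gammaMeasure_one (ha : 0 < a) {p : ℝ} (hp : 0 < a + p) :
    Integrable (fun x => x ^ p) (gammaMeasure a 1) := by
  rw [integrable_gammaMeasure_iff ha one_pos]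
  exact IntegrableOn.congr_fun ((GammaIntegral_convergent hp).const_mul (Gamma a)⁻¹)
    (fun x hx => (gammaPDFReal_one_mul_rpow hx p).symm) measurableSet_Ioi

theorem integral_rpow_gammaMeasure_one (ha : 0 < a) {p : ℝ} (hp : 0 < a + p) :
    ∫ x, x ^ p ∂gammaMeasure a 1 = Gamma (a + p) / Gamma a := by
  rw [integral_gammaMeasure ha one_pos, setIntegral_congr_fun measurableSet_Ioi
    fun x hx => gammaPDFReal_one_mul_rpow hx p, integral_const_mul, Gamma_eq_integral hp]
  ring

theorem integrable_pow_gammaMeasure (ha : 0 < a) (hr : 0 < r) (n : ℕ) :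
    Integrable (fun x => x ^ n) (gammaMeasure a r) := by
  have h : Integrable (fun x => (r * x) ^ n) (gammaMeasure a r) := by
    rw [integrable_comp_mul_gammaMeasure_iff ha hr (· ^ n)]
    simpa only [rpow_natCast] using integrable_rpow_gammaMeasure_one ha (p := n) (by positivity)
  refine (h.const_mul (r ^ n)⁻¹).congr (ae_of_all _ fun x => ?_)
  simp only [mul_pow, inv_mul_cancel_left₀ (pow_ne_zero n hr.ne')]

theorem integrable_id_gammaMeasure (ha : 0 < a) (hr : 0 < r) :
    Integrable (fun x => x) (gammaMeasure a r) := by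
  simpa using integrable_pow_gammaMeasure ha hr 1

theorem integral_id_gammaMeasure (ha : 0 < a) (hr : 0 < r) :
    ∫ x, x ∂gammaMeasure a r = a / r := by
  have h := integral_comp_mul_gammaMeasure ha hr id
  have h1 := integral_rpow_gammaMeasure_one ha (p := 1) (by linarith)
  simp only [id, rpow_one] at h h1
  rw [integral_const_mul, h1, Gamma_add_one ha.ne', mul_div_assoc,
    div_self (Gamma_pos_of_pos ha).ne', mul_one] at h
  rw [eq_div_iff hr.ne', mul_comm, h]

theorem integrable_log_gammaMeasure_one (ha : 0 < a) : Integrable log (gammaMeasure a 1) := by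
  have hbound : Integrable (fun x => x ^ (1 : ℝ) + x ^ (-(a / 2)) / (a / 2)) (gammaMeasure a 1) :=
    (integrable_rpow_gammaMeasure_one ha (by linarith)).add
      ((integrable_rpow_gammaMeasure_one ha (by linarith)).div_const _)
  refine hbound.mono' measurable_log.aestronglyMeasurable ?_
  filter_upwards [ae_pos_gammaMeasure a 1] with x hx
  rw [rpow_one, norm_eq_abs]
  exact abs_log_le_self_add_rpow_neg_div hx (by positivity)

theorem log_ae_eq_log_mul_sub_log (hr : 0 < r) :
    log =ᵐ[gammaMeasure a r] fun x => log (r * x) - log r := by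
  filter_upwards [ae_pos_gammaMeasure a r] with x hx
  rw [log_mul hr.ne' hx.ne', add_sub_cancel_left]

theorem integrable_log_gammaMeasure (ha : 0 < a) (hr : 0 < r) :
    Integrable log (gammaMeasure a r) := by
  have h : Integrable (fun x => log (r * x)) (gammaMeasure a r) :=
    (integrable_comp_mul_gammaMeasure_iff ha hr log).mpr (integrable_log_gammaMeasure_one ha)
  have := isProbabilityMeasure_gammaMeasure ha hr
  exact (h.sub (integrable_const _)).congr (log_ae_eq_log_mul_sub_log hr).symm

theorem integral_log_gammaMeasure (ha : 0 < a) (hr : 0 < r) :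
    ∫ x, log x ∂gammaMeasure a r = ∫ x, log x ∂gammaMeasure a 1 - log r := by
  have := isProbabilityMeasure_gammaMeasure ha hr
  rw [integral_congr_ae (log_ae_eq_log_mul_sub_log hr), integral_sub _ (integrable_const _),
    integral_comp_mul_gammaMeasure ha hr log, integral_const, probReal_univ, one_smul]
  exact (integrable_comp_mul_gammaMeasure_iff ha hr log).mpr (integrable_log_gammaMeasure_one ha)

end GammaMeasure

theorem hasSum_poisson (x : ℝ) : HasSum (fun n : ℕ => exp (-x) * x ^ n / n !) 1 := by
  have h := (NormedSpace.expSeries_div_hasSum_exp x).mul_left (exp (-x))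
  rw [← exp_eq_exp_ℝ, ← exp_add, neg_add_cancel, exp_zero] at h
  simpa only [mul_div_assoc] using h

theorem hasSum_descFactorial_mul_poisson (x : ℝ) (k : ℕ) :
    HasSum (fun y : ℕ => (y.descFactorial k : ℝ) * (exp (-x) * x ^ y / y !)) (x ^ k) := by
  refine (hasSum_nat_add_iff' k).mp ?_
  rw [Finset.sum_eq_zero fun i hi => by
    rw [Nat.descFactorial_eq_zero_iff_lt.mpr (Finset.mem_range.mp hi), Nat.cast_zero, zero_mul],
    sub_zero]
  rw [← mul_one (x ^ k)]
  refine ((hasSum_poisson x).mul_left (x ^ k)).congr_fun fun n => ?_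
  have h := Nat.factorial_mul_descFactorial (Nat.le_add_left k n)
  rw [Nat.add_sub_cancel] at h
  have hn : (n ! : ℝ) ≠ 0 := by positivity
  rw [← h, pow_add, Nat.cast_mul]
  field_simp

theorem log_poisson {x : ℝ} (hx : 0 < x) (y : ℕ) :
    log (exp (-x) * x ^ y / y !) = -x + y * log x - log (y ! : ℝ) := by
  rw [log_div (by positivity) (by positivity), log_mul (by positivity) (by positivity), log_exp,
    log_pow]

section GammaPoisson

variable {γ r : ℝ}

theorem margGammaPoisson_nonneg (y : ℕ) : 0 ≤ margGammaPoisson γ r y :=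
  integral_nonneg_of_ae <| (ae_pos_gammaMeasure γ r).mono fun x hx => by positivity

theorem hasSum_descFactorial_mul_margGammaPoisson (hγ : 0 < γ) (hr : 0 < r) (k : ℕ) :
    HasSum (fun y : ℕ => (y.descFactorial k : ℝ) * margGammaPoisson γ r y)
      (∫ x, x ^ k ∂gammaMeasure γ r) := by
  simp only [margGammaPoisson, ← integral_const_mul]
  refine hasSum_integral_of_nonneg (fun y => by fun_prop) (fun y => ?_)
    (integrable_pow_gammaMeasure hγ hr k)
    (ae_of_all _ fun x => hasSum_descFactorial_mul_poisson x k)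
  filter_upwards [ae_pos_gammaMeasure γ r] with x hx
  positivity

theorem hasSum_margGammaPoisson (hγ : 0 < γ) (hr : 0 < r) :
    HasSum (margGammaPoisson γ r) 1 := by
  have := isProbabilityMeasure_gammaMeasure hγ hr
  simpa using hasSum_descFactorial_mul_margGammaPoisson hγ hr 0

theorem hasSum_mul_margGammaPoisson (hγ : 0 < γ) (hr : 0 < r) :
    HasSum (fun y : ℕ => (y : ℝ) * margGammaPoisson γ r y) (γ / r) := by
  simpa [integral_id_gammaMeasure hγ hr] using hasSum_descFactorial_mul_margGammaPoisson hγ hr 1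

theorem summable_log_factorial_mul_margGammaPoisson (hγ : 0 < γ) (hr : 0 < r) :
    Summable (fun y : ℕ => log (y ! : ℝ) * margGammaPoisson γ r y) :=
  (hasSum_descFactorial_mul_margGammaPoisson hγ hr 2).summable.of_nonneg_of_le
    (fun y => mul_nonneg (log_nonneg (Nat.one_le_cast.mpr y.factorial_pos))
      (margGammaPoisson_nonneg y))
    (fun y => mul_le_mul_of_nonneg_right (log_factorial_le_descFactorial_two y)
      (margGammaPoisson_nonneg y))

theorem log_poisson_ae_eq (y : ℕ) :
    (fun x : ℝ => log (exp (-x) * x ^ y / y !)) =ᵐ[gammaMeasure γ r]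
      fun x => -x + y * log x - log (y ! : ℝ) :=
  (ae_pos_gammaMeasure γ r).mono fun _ hx => log_poisson hx y

theorem integrable_log_poisson (hγ : 0 < γ) (hr : 0 < r) (y : ℕ) :
    Integrable (fun x : ℝ => log (exp (-x) * x ^ y / y !)) (gammaMeasure γ r) := by
  have := isProbabilityMeasure_gammaMeasure hγ hr
  have h : Integrable (fun x => -x + y * log x - log (y ! : ℝ)) (gammaMeasure γ r) :=
    ((integrable_id_gammaMeasure hγ hr).neg.add
      ((integrable_log_gammaMeasure hγ hr).const_mul _)).sub (integrable_const _)
  exact h.congr (log_poisson_ae_eq y).symm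

theorem esllGammaPoisson_eq (hγ : 0 < γ) (hr : 0 < r) (y : ℕ) :
    esllGammaPoisson γ r y =
      -(γ / r) + y * (∫ x, log x ∂gammaMeasure γ 1 - log r) - log (y ! : ℝ) := by
  have := isProbabilityMeasure_gammaMeasure hγ hr
  have hneg : Integrable (fun x : ℝ => -x) (gammaMeasure γ r) :=
    (integrable_id_gammaMeasure hγ hr).neg
  have hlog : Integrable (fun x => y * log x) (gammaMeasure γ r) :=
    (integrable_log_gammaMeasure hγ hr).const_mul _
  have hsum : Integrable (fun x => -x + y * log x) (gammaMeasure γ r) := hneg.add hlog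
  rw [esllGammaPoisson, integral_congr_ae (log_poisson_ae_eq y),
    integral_sub hsum (integrable_const _), integral_add hneg hlog, integral_neg,
    integral_const_mul, integral_id_gammaMeasure hγ hr, integral_log_gammaMeasure hγ hr, integral_const,
    probReal_univ, one_smul]

theorem hasSum_margGammaPoisson_mul_esllGammaPoisson {lam₀ lam : ℝ} (hγ : 0 < γ)
    (hlam₀ : 0 < lam₀) (hlam : 0 < lam) :
    HasSum (fun y : ℕ => margGammaPoisson γ lam₀ y * esllGammaPoisson γ lam y)
      (-(γ / lam) + γ / lam₀ * (∫ x, log x ∂gammaMeasure γ 1 - log lam)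
        - ∑' y : ℕ, log (y ! : ℝ) * margGammaPoisson γ lam₀ y) := by
  set c := ∫ x, log x ∂gammaMeasure γ 1
  set S := ∑' y : ℕ, log (y ! : ℝ) * margGammaPoisson γ lam₀ y
  have h := (((hasSum_margGammaPoisson hγ hlam₀).mul_left (-(γ / lam))).add
    ((hasSum_mul_margGammaPoisson hγ hlam₀).mul_left (c - log lam))).sub
    (summable_log_factorial_mul_margGammaPoisson hγ hlam₀).hasSum
  rw [show -(γ / lam) + γ / lam₀ * (c - log lam) - S
      = -(γ / lam) * 1 + (c - log lam) * (γ / lam₀) - S by ring]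
  refine h.congr_fun fun y => ?_
  rw [esllGammaPoisson_eq hγ hlam]
  ring

end GammaPoisson

end ProbabilityTheory

/-- **The simulation-based proxy equals the true parameter in the gamma–Poisson
model.**  With `Y` marginally distributed according to the gamma–Poisson model at
`(γ, λ₀)`, the data-averaged expected simulated log-likelihood
`u(λ₀, λ) = E_Y[μ₁(λ; Y)] = Σ_y P(Y = y) μ₁(λ; y)` is finite (the integrands are
integrable and the series is summable) for every `λ > 0`, and `λ ↦ u(λ₀, λ)` attains
its unique global maximum on `(0, ∞)` at `λ = λ₀`; hence `R(λ₀) = λ₀`. -/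
theorem proxy_gamma_poisson (γ lam₀ : ℝ) (hγ : 0 < γ) (hlam₀ : 0 < lam₀) :
    (∀ lam : ℝ, 0 < lam →
      (∀ y : ℕ, Integrable
          (fun x : ℝ => Real.log (Real.exp (-x) * x ^ y / (Nat.factorial y : ℝ)))
          (gammaMeasure γ lam)) ∧
        Summable (fun y : ℕ => margGammaPoisson γ lam₀ y * esllGammaPoisson γ lam y)) ∧
    (∀ lam : ℝ, 0 < lam → lam ≠ lam₀ →
      ∑' y : ℕ, margGammaPoisson γ lam₀ y * esllGammaPoisson γ lam y <
        ∑' y : ℕ, margGammaPoisson γ lam₀ y * esllGammaPoisson γ lam₀ y) := by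
  refine ⟨fun lam hlam => ⟨integrable_log_poisson hγ hlam,
    (hasSum_margGammaPoisson_mul_esllGammaPoisson hγ hlam₀ hlam).summable⟩,
    fun lam hlam hne => ?_⟩
  rw [(hasSum_margGammaPoisson_mul_esllGammaPoisson hγ hlam₀ hlam).tsum_eq,
    (hasSum_margGammaPoisson_mul_esllGammaPoisson hγ hlam₀ hlam₀).tsum_eq]
  linarith [neg_div_sub_div_mul_log_lt hγ hlam₀ hlam hne]
end
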